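/- (Inequality (A.4) in the proof of Lemma 2.) Let L : ℝ^p → ℝ be twice continuously differentiable, let β* ∈ ℝ^p with support S* = {j : β*_j ≠ 0}, let λ > 0, and let β̃ be a global minimizer of β ↦ L(β) + λ‖β‖₁. If ‖∇L(β*)‖_∞ ≤ λ/2, then, writing w = β̃ − β*, there exists a point β̄ on the line segment between β* and β̃ such that wᵀ∇²L(β̄)w + λ‖w‖₁ ≤ 4λ ∑_{j ∈ S*} |w_j|. -/

import Mathlib

/-!
Taylor's theorem with Lagrange remainder along the segment from `β*` to `β̃` gives
`½ wᵀ∇²L(β̄)w = L(β̃) - L(β*) - ∇L(β*)ᵀw`. Minimality of `β̃` bounds `L(β̃) - L(β*)` by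
`λ(‖β*‖₁ - ‖β̃‖₁)`, Hölder's inequality bounds `-∇L(β*)ᵀw` by `(λ/2)‖w‖₁`, and
`‖β*‖₁ - ‖β̃‖₁ + ‖w‖₁ ≤ 2 ∑_{j ∈ S*} |wⱼ|` coordinatewise, because off `S*` the two sides vanish.
-/

open Finset Set

theorem exists_taylor_lagrange_two_of_hasDerivAt {g g' g'' : ℝ → ℝ} {a b : ℝ} (hab : a < b)
    (hg : ∀ t, HasDerivAt g (g' t) t) (hg' : ∀ t, HasDerivAt g' (g'' t) t) :
    ∃ d ∈ Ioo a b, g b = g a + g' a * (b - a) + g'' d * (b - a) ^ 2 / 2 := by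
  set ψ : ℝ → ℝ := fun t => g t - g a - g' a * (t - a)
  have hψ : ∀ t, HasDerivAt ψ (g' t - g' a) t := fun t => by
    simpa using
      ((hg t).sub_const (g a)).fun_sub (((hasDerivAt_id' t).sub_const a).const_mul (g' a))
  have hsq : ∀ t, HasDerivAt (fun t => (t - a) ^ 2) (2 * (t - a)) t := fun t => by
    simpa using ((hasDerivAt_id' t).sub_const a).fun_pow 2
  -- Cauchy's mean value theorem for `ψ` against `(t - a)²`, then Lagrange's for `g'`
  obtain ⟨c, hc, hcauchy⟩ := exists_ratio_hasDerivAt_eq_ratio_slope ψ _ hab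
    (fun t _ => (hψ t).continuousAt.continuousWithinAt) (fun t _ => hψ t)
    _ _ (fun t _ => (hsq t).continuousAt.continuousWithinAt) (fun t _ => hsq t)
  obtain ⟨d, hd, hslope⟩ := exists_hasDerivAt_eq_slope g' g'' hc.1
    (fun t _ => (hg' t).continuousAt.continuousWithinAt) (fun t _ => hg' t)
  refine ⟨d, ⟨hd.1, hd.2.trans hc.2⟩, ?_⟩
  have hca : c - a ≠ 0 := (sub_pos.2 hc.1).ne'
  rw [hslope]
  field_simp
  simp only [ψ, sub_self, mul_zero, zero_pow two_ne_zero, sub_zero] at hcauchy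
  linear_combination -hcauchy

theorem ContDiff.exists_mem_segment_taylor_lagrange_two {E : Type*} [NormedAddCommGroup E]
    [NormedSpace ℝ E] {f : E → ℝ} (hf : ContDiff ℝ 2 f) (x y : E) :
    ∃ z ∈ segment ℝ x y,
      f y = f x + fderiv ℝ f x (y - x) + fderiv ℝ (fderiv ℝ f) z (y - x) (y - x) / 2 := by
  set v := y - x
  have hline : ∀ t : ℝ, HasDerivAt (fun s : ℝ => x + s • v) v t := fun t => by
    simpa using ((hasDerivAt_id t).smul_const v).const_add x
  have hf1 : Differentiable ℝ f := hf.differentiable (by norm_num)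
  have hf2 : Differentiable ℝ (fderiv ℝ f) :=
    (hf.fderiv_right (m := 1) (by norm_num)).differentiable (by norm_num)
  have hg : ∀ t : ℝ, HasDerivAt (fun s => f (x + s • v)) (fderiv ℝ f (x + t • v) v) t :=
    fun t => (hf1 _).hasFDerivAt.comp_hasDerivAt t (hline t)
  have hg' : ∀ t : ℝ, HasDerivAt (fun s => fderiv ℝ f (x + s • v) v)
      (fderiv ℝ (fderiv ℝ f) (x + t • v) v v) t := fun t => by
    simpa using ((hf2 _).hasFDerivAt.comp_hasDerivAt t (hline t)).clm_apply (hasDerivAt_const t v)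
  obtain ⟨d, hd, htaylor⟩ := exists_taylor_lagrange_two_of_hasDerivAt zero_lt_one hg hg'
  refine ⟨x + d • v, ?_, by simpa [v] using htaylor⟩
  rw [segment_eq_image']
  exact ⟨d, Ioo_subset_Icc_self hd, rfl⟩

theorem EuclideanSpace.abs_apply_le_mul_sum_abs {ι : Type*} [Fintype ι] [DecidableEq ι]
    (ℓ : EuclideanSpace ℝ ι →ₗ[ℝ] ℝ) {c : ℝ}
    (hℓ : ∀ j, |ℓ (EuclideanSpace.single j 1)| ≤ c) (w : EuclideanSpace ℝ ι) :
    |ℓ w| ≤ c * ∑ j, |w j| := by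
  have hw : ℓ w = ∑ j, w j * ℓ (EuclideanSpace.single j 1) := by
    conv_lhs => rw [← (EuclideanSpace.basisFun ι ℝ).sum_repr w]
    simp
  calc |ℓ w| ≤ ∑ j, |w j| * |ℓ (EuclideanSpace.single j 1)| := by
        rw [hw]
        simpa only [abs_mul] using
          abs_sum_le_sum_abs (fun j => w j * ℓ (EuclideanSpace.single j 1)) univ
    _ ≤ ∑ j, |w j| * c := sum_le_sum fun j _ => mul_le_mul_of_nonneg_left (hℓ j) (abs_nonneg _)
    _ = c * ∑ j, |w j| := by rw [← sum_mul, mul_comm]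

theorem sum_abs_sub_sum_abs_add_sum_abs_sub_le {ι : Type*} [Fintype ι] (a b : ι → ℝ) :
    ∑ j, |a j| - ∑ j, |b j| + ∑ j, |b j - a j| ≤
      2 * ∑ j ∈ univ.filter (fun j => a j ≠ 0), |b j - a j| := by
  rw [sum_filter, mul_sum, ← sum_sub_distrib, ← sum_add_distrib]
  refine sum_le_sum fun j _ => ?_
  split_ifs with ha
  · linarith [abs_sub_abs_le_abs_sub (a j) (b j), abs_sub_comm (a j) (b j)]
  · simp [not_not.1 ha]

open scoped Classical in
/-- Inequality (A.4) in the proof of Lemma 2: writing `w = β̃ − β*`, there is a point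
`β̄` on the segment between `β*` and `β̃` with
`wᵀ∇²L(β̄)w + λ‖w‖₁ ≤ 4λ ∑_{j ∈ S*} |wⱼ|`. -/
theorem lasso_basic_inequality
    {p : ℕ} (L : EuclideanSpace ℝ (Fin p) → ℝ)
    (hsmooth : ContDiff ℝ 2 L)
    (βs : EuclideanSpace ℝ (Fin p)) (lam : ℝ) (hlam : 0 < lam)
    (βt : EuclideanSpace ℝ (Fin p))
    (hmin : ∀ β : EuclideanSpace ℝ (Fin p),
      L βt + lam * ∑ j, |βt j| ≤ L β + lam * ∑ j, |β j|)
    (hgrad : ∀ j : Fin p, |fderiv ℝ L βs (EuclideanSpace.single j 1)| ≤ lam / 2) :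
    ∃ βbar ∈ segment ℝ βs βt,
      fderiv ℝ (fun x => fderiv ℝ L x) βbar (βt - βs) (βt - βs) +
          lam * ∑ j, |(βt - βs) j| ≤
        4 * lam * ∑ j ∈ Finset.univ.filter (fun j => βs j ≠ 0), |(βt - βs) j| := by
  obtain ⟨βbar, hβbar, htaylor⟩ := hsmooth.exists_mem_segment_taylor_lagrange_two βs βt
  refine ⟨βbar, hβbar, ?_⟩
  have hgradw : -fderiv ℝ L βs (βt - βs) ≤ lam / 2 * ∑ j, |(βt - βs) j| :=
    (neg_le_abs _).trans <|
      EuclideanSpace.abs_apply_le_mul_sum_abs (fderiv ℝ L βs).toLinearMap hgrad _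
  have hsupport := mul_le_mul_of_nonneg_left
    (sum_abs_sub_sum_abs_add_sum_abs_sub_le βs.ofLp βt.ofLp) (by positivity : 0 ≤ 2 * lam)
  simp only [WithLp.ofLp_sub, Pi.sub_apply] at hgradw ⊢
  linarith [hmin βs]
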